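/- Integrating the n-variable Gaussian-copula joint density over the last variable yields the (n−1)-variable Gaussian-copula density with the correlation matrix obtained by deleting the last row and column: ∫_ℝ c_R(F_1(y_1),...,F_n(y_n)) Π_{i=1}^n F_i'(y_i) dy_n = c_{R'}(F_1(y_1),...,F_{n-1}(y_{n-1})) Π_{i=1}^{n-1} F_i'(y_i), where R' is the leading (n−1)×(n−1) principal submatrix of R. -/

import Mathlib

open MeasureTheory Matrix Set

/-- The standard normal CDF. -/
noncomputable def stdNormalCDF (x : ℝ) : ℝ :=
  ∫ t in Set.Iic x, Real.exp (-t ^ 2 / 2) / Real.sqrt (2 * Real.pi)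

namespace GaussCopulaAux

open Real

open MeasureTheory Real Set

lemma integral_rexp_quadratic {p : ℝ} (hp : p < 0) (q : ℝ) :
    ∫ x : ℝ, Real.exp (p * x ^ 2 + q * x) = Real.sqrt (π / -p) * Real.exp (-(q ^ 2) / (4 * p)) := by
  have h := integral_cexp_quadratic (b := (p : ℂ)) (by simpa using hp) (q : ℂ) 0
  have h2 : ∀ x : ℝ, Complex.exp ((p:ℂ) * x ^ 2 + (q:ℂ) * x + 0) =
      ((Real.exp (p * x ^ 2 + q * x) : ℝ) : ℂ) := by
    intro x
    rw [Complex.ofReal_exp]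
    push_cast
    ring_nf
  rw [integral_congr_ae (Filter.Eventually.of_forall h2)] at h
  have h3 : ((π / -p : ℂ)) ^ (1/2 : ℂ) = ((Real.sqrt (π / -p) : ℝ) : ℂ) := by
    rw [Real.sqrt_eq_rpow]
    rw [show ((π / -p : ℂ)) = (((π / -p : ℝ)) : ℂ) by push_cast; ring,
      show (1/2 : ℂ) = ((1/2 : ℝ) : ℂ) by norm_num,
      ← Complex.ofReal_cpow (le_of_lt (div_pos Real.pi_pos (neg_pos.mpr hp))) (1/2)]
  rw [h3] at h
  have h4 : Complex.exp (0 - (q:ℂ)^2/(4 * p)) = ((Real.exp (-(q^2)/(4*p)) : ℝ) : ℂ) := by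
    rw [Complex.ofReal_exp]; push_cast; ring_nf
  rw [h4] at h
  have h5 := (integral_ofReal (𝕜 := ℂ) (f := fun x => Real.exp (p * x ^ 2 + q * x)) (μ := volume)).symm.trans h
  exact Complex.ofReal_injective (h5.trans (Complex.ofReal_mul _ _).symm)

noncomputable def stdPDF (t : ℝ) : ℝ := Real.exp (-t ^ 2 / 2) / Real.sqrt (2 * Real.pi)

lemma stdPDF_pos (t : ℝ) : 0 < stdPDF t := by
  unfold stdPDF
  positivity

lemma stdPDF_continuous : Continuous stdPDF := by
  unfold stdPDF
  fun_prop

lemma stdPDF_integrable : Integrable stdPDF := by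
  have h : Integrable (fun t : ℝ => Real.exp (-(1/2) * t ^ 2)) := integrable_exp_neg_mul_sq (by norm_num)
  have : stdPDF = fun t => Real.exp (-(1/2) * t ^ 2) * (Real.sqrt (2 * Real.pi))⁻¹ := by
    funext t; unfold stdPDF; rw [div_eq_mul_inv]; ring_nf
  rw [this]
  exact h.mul_const _

lemma stdPDF_integral : ∫ t : ℝ, stdPDF t = 1 := by
  have h : ∫ t : ℝ, Real.exp (-(1/2) * t ^ 2) = Real.sqrt (π / (1/2)) := integral_gaussian (1/2)
  have e : stdPDF = fun t => Real.exp (-(1/2) * t ^ 2) * (Real.sqrt (2 * Real.pi))⁻¹ := by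
    funext t; unfold stdPDF; rw [div_eq_mul_inv]; ring_nf
  rw [e, integral_mul_const, h]
  rw [show π / (1/2) = 2 * π by ring]
  rw [mul_inv_cancel₀ (by positivity)]

lemma stdNormalCDF_hasDerivAt (x : ℝ) : HasDerivAt stdNormalCDF (stdPDF x) x := by
  have key : ∀ y : ℝ, stdNormalCDF y = stdNormalCDF 0 + ∫ t in (0:ℝ)..y, stdPDF t := by
    intro y
    have := intervalIntegral.integral_Iic_sub_Iic (stdPDF_integrable.integrableOn (s := Iic 0))
      (stdPDF_integrable.integrableOn (s := Iic y)) (f := stdPDF) (μ := volume)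
    unfold stdNormalCDF stdPDF at this ⊢
    linarith [this]
  have h : HasDerivAt (fun y => stdNormalCDF 0 + ∫ t in (0:ℝ)..y, stdPDF t) (stdPDF x) x := by
    refine HasDerivAt.const_add _ ?_
    exact intervalIntegral.integral_hasDerivAt_right
      (stdPDF_integrable.intervalIntegrable)
      (stdPDF_continuous.stronglyMeasurableAtFilter _ _)
      stdPDF_continuous.continuousAt
  exact (funext key : stdNormalCDF = _) ▸ h

lemma stdNormalCDF_mem_Ioo (x : ℝ) : stdNormalCDF x ∈ Set.Ioo (0:ℝ) 1 := by
  have hint : ∀ s : Set ℝ, MeasurableSet s → IntegrableOn stdPDF s := fun s _ =>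
    stdPDF_integrable.integrableOn
  have hpos : ∀ s : Set ℝ, MeasurableSet s → volume s ≠ 0 → 0 < ∫ t in s, stdPDF t := by
    intro s hs hvs
    rw [setIntegral_pos_iff_support_of_nonneg_ae
      (Filter.Eventually.of_forall fun t => (stdPDF_pos t).le) (hint s hs)]
    have : Function.support stdPDF = Set.univ := by
      ext t; simp [Function.mem_support, (stdPDF_pos t).ne']
    rw [this, Set.univ_inter]
    exact hvs.bot_lt
  constructor
  · have := hpos (Iic x) measurableSet_Iic (by simp [Real.volume_Iic])
    simpa [stdNormalCDF, stdPDF] using this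
  · have hsplit : (∫ t in Iic x, stdPDF t) + ∫ t in (Iic x)ᶜ, stdPDF t = ∫ t, stdPDF t :=
      integral_add_compl measurableSet_Iic stdPDF_integrable
    have h2 : 0 < ∫ t in (Iic x)ᶜ, stdPDF t := by
      refine hpos _ measurableSet_Iic.compl ?_
      rw [Set.compl_Iic]
      simp [Real.volume_Ioi]
    have h3 : (∫ t in Iic x, stdPDF t) < 1 := by
      rw [stdPDF_integral] at hsplit; linarith
    simpa [stdNormalCDF, stdPDF] using h3


lemma deriv_nonneg_of_monotone {f : ℝ → ℝ} {d x : ℝ} (h : HasDerivAt f d x)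
    (hm : Monotone f) : 0 ≤ d := by
  have h1 := hasDerivAt_iff_tendsto_slope.mp h
  have h2 : Filter.Tendsto (slope f x) (nhdsWithin x (Set.Ioi x)) (nhds d) :=
    h1.mono_left (nhdsWithin_mono x fun y hy => ne_of_gt hy)
  refine ge_of_tendsto h2 ?_
  filter_upwards [self_mem_nhdsWithin] with y hy
  have hxy : x < y := hy
  rw [slope_def_field]
  exact div_nonneg (sub_nonneg.2 (hm hxy.le)) (sub_pos.2 hxy).le

lemma subst_lemma {f : ℝ → ℝ} {f' : ℝ → ℝ} (hderiv : ∀ x, HasDerivAt f (f' x) x)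
    (hnonneg : ∀ x, 0 ≤ f' x) (hinj : Function.Injective f)
    (himg : f '' Set.univ = Set.Ioo 0 1) (g : ℝ → ℝ) :
    ∫ u in Set.Ioo (0:ℝ) 1, g u = ∫ x : ℝ, f' x * g (f x) := by
  rw [← himg, integral_image_eq_integral_abs_deriv_smul MeasurableSet.univ
    (fun x _ => (hderiv x).hasDerivWithinAt) hinj.injOn g]
  simp only [smul_eq_mul, Measure.restrict_univ]
  congr 1
  funext x
  rw [abs_of_nonneg (hnonneg x)]


lemma det_mul_inv_last_last {n : ℕ} (R : Matrix (Fin (n+1)) (Fin (n+1)) ℝ) (hR : R.det ≠ 0) :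
    R.det * R⁻¹ (Fin.last n) (Fin.last n) = (R.submatrix Fin.castSucc Fin.castSucc).det := by
  rw [Matrix.inv_def, Ring.inverse_eq_inv']
  simp only [Matrix.smul_apply, smul_eq_mul]
  rw [← mul_assoc, mul_inv_cancel₀ hR, one_mul, Matrix.adjugate_apply]
  rw [Matrix.det_succ_row _ (Fin.last n)]
  rw [Finset.sum_eq_single (Fin.last n)]
  · rw [Matrix.updateRow_self]
    simp only [Pi.single_eq_same]
    rw [Fin.succAbove_last]
    have h1 : ((-1 : ℝ)) ^ ((Fin.last n : ℕ) + (Fin.last n : ℕ)) = 1 :=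
      Even.neg_one_pow ⟨n, by simp [Fin.val_last]⟩
    simp only [h1, one_mul, mul_one]
    congr 1
    ext i j
    simp [Matrix.updateRow_ne (Fin.castSucc_lt_last i).ne]
  · intro j _ hj
    rw [Matrix.updateRow_self, Pi.single_eq_of_ne hj]
    ring
  · simp

lemma submatrix_inv_eq {n : ℕ} (R : Matrix (Fin (n+1)) (Fin (n+1)) ℝ)
    (hsym : R.IsSymm) (hRB : R * R⁻¹ = 1) (ha : R⁻¹ (Fin.last n) (Fin.last n) ≠ 0) :
    (R.submatrix Fin.castSucc Fin.castSucc)⁻¹ = Matrix.of (fun i j : Fin n =>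
      R⁻¹ i.castSucc j.castSucc - (R⁻¹ (Fin.last n) (Fin.last n))⁻¹ *
        R⁻¹ i.castSucc (Fin.last n) * R⁻¹ j.castSucc (Fin.last n)) := by
  set B := R⁻¹ with hB
  set a := B (Fin.last n) (Fin.last n) with haa
  apply Matrix.inv_eq_right_inv
  ext i j
  have h1 : (∑ k : Fin n, R i.castSucc k.castSucc * B k.castSucc j.castSucc)
      + R i.castSucc (Fin.last n) * B (Fin.last n) j.castSucc
      = if i = j then (1:ℝ) else 0 := by
    have := congrFun (congrFun hRB i.castSucc) j.castSucc
    rw [Matrix.mul_apply] at this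
    rw [Fin.sum_univ_castSucc] at this
    rw [this]
    simp [Matrix.one_apply, Fin.castSucc_inj]
  have h2 : (∑ k : Fin n, R i.castSucc k.castSucc * B k.castSucc (Fin.last n))
      + R i.castSucc (Fin.last n) * a = 0 := by
    have := congrFun (congrFun hRB i.castSucc) (Fin.last n)
    rw [Matrix.mul_apply] at this
    rw [Fin.sum_univ_castSucc] at this
    rw [this]
    simp [Matrix.one_apply, (Fin.castSucc_lt_last i).ne]
  rw [Matrix.mul_apply]
  simp only [Matrix.submatrix_apply, Matrix.of_apply]
  have expand : ∑ k : Fin n, R i.castSucc k.castSucc *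
      (B k.castSucc j.castSucc - a⁻¹ * B k.castSucc (Fin.last n) * B j.castSucc (Fin.last n))
      = (∑ k : Fin n, R i.castSucc k.castSucc * B k.castSucc j.castSucc)
        - a⁻¹ * B j.castSucc (Fin.last n) *
          (∑ k : Fin n, R i.castSucc k.castSucc * B k.castSucc (Fin.last n)) := by
    rw [Finset.mul_sum, ← Finset.sum_sub_distrib]
    apply Finset.sum_congr rfl
    intros; ring
  rw [expand]
  have e2 : (∑ k : Fin n, R i.castSucc k.castSucc * B k.castSucc (Fin.last n))
      = -(R i.castSucc (Fin.last n) * a) := by linarith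
  rw [e2]
  have e1 : (∑ k : Fin n, R i.castSucc k.castSucc * B k.castSucc j.castSucc)
      = (if i = j then (1:ℝ) else 0) - R i.castSucc (Fin.last n) * B (Fin.last n) j.castSucc := by
    linarith [h1]
  rw [e1]
  have hBsym : B.IsSymm := by
    rw [hB, Matrix.IsSymm, Matrix.transpose_nonsing_inv, hsym.eq]
  have hsymB : B (Fin.last n) j.castSucc = B j.castSucc (Fin.last n) := hBsym.apply _ _
  rw [hsymB, Matrix.one_apply]
  by_cases hij : i = j <;> simp only [hij, if_true, if_false] <;> field_simp <;> ring


lemma dot_snoc {n : ℕ} (M : Matrix (Fin (n+1)) (Fin (n+1)) ℝ) (w : Fin n → ℝ) (s : ℝ) :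
    (Fin.snoc w s : Fin (n+1) → ℝ) ⬝ᵥ M *ᵥ (Fin.snoc w s : Fin (n+1) → ℝ) =
      w ⬝ᵥ (M.submatrix Fin.castSucc Fin.castSucc) *ᵥ w
      + (∑ i, w i * M i.castSucc (Fin.last n)) * s
      + s * (∑ j, M (Fin.last n) j.castSucc * w j)
      + s ^ 2 * M (Fin.last n) (Fin.last n) := by
  simp only [dotProduct, mulVec, Fin.sum_univ_castSucc, Fin.snoc_castSucc, Fin.snoc_last,
    submatrix_apply, dotProduct]
  have h1 : ∀ i : Fin n,
      w i * (∑ j : Fin n, M i.castSucc j.castSucc * w j + M i.castSucc (Fin.last n) * s)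
      = w i * (∑ j : Fin n, M i.castSucc j.castSucc * w j) + w i * M i.castSucc (Fin.last n) * s := by
    intro i; ring
  rw [Finset.sum_congr rfl (fun i _ => h1 i), Finset.sum_add_distrib]
  rw [show (∑ i : Fin n, w i * M i.castSucc (Fin.last n) * s)
      = (∑ i : Fin n, w i * M i.castSucc (Fin.last n)) * s from (Finset.sum_mul _ _ _).symm]
  ring


lemma dot_rank_one {n : ℕ} (N : Matrix (Fin n) (Fin n) ℝ) (c w : Fin n → ℝ) (t : ℝ) :
    w ⬝ᵥ ((N - Matrix.of fun i j => t * c i * c j) *ᵥ w)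
      = w ⬝ᵥ (N *ᵥ w) - t * (∑ i, w i * c i) ^ 2 := by
  simp only [dotProduct, mulVec, Matrix.sub_apply, Matrix.of_apply, dotProduct]
  have h1 : ∀ i : Fin n, w i * (∑ j : Fin n, (N i j - t * c i * c j) * w j)
      = w i * (∑ j : Fin n, N i j * w j) - t * (w i * c i) * (∑ j : Fin n, c j * w j) := by
    intro i
    rw [show (∑ j : Fin n, (N i j - t * c i * c j) * w j)
        = (∑ j : Fin n, N i j * w j) - t * c i * (∑ j : Fin n, c j * w j) by
      rw [Finset.mul_sum, ← Finset.sum_sub_distrib]; apply Finset.sum_congr rfl; intros; ring]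
    ring
  rw [Finset.sum_congr rfl (fun i _ => h1 i), Finset.sum_sub_distrib]
  rw [show (∑ i : Fin n, t * (w i * c i) * (∑ j : Fin n, c j * w j))
      = (∑ i : Fin n, w i * c i) * (t * (∑ j : Fin n, c j * w j)) by
    rw [Finset.sum_mul]; apply Finset.sum_congr rfl; intros; ring]
  rw [show (∑ j : Fin n, c j * w j) = (∑ j : Fin n, w j * c j) by
    apply Finset.sum_congr rfl; intros; ring]
  ring

lemma posdef_diag_pos {m : Type*} [Fintype m] [DecidableEq m]
    {M : Matrix m m ℝ} (h : M.PosDef) (i : m) : 0 < M i i := by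
  exact h.diag_pos

end GaussCopulaAux

open GaussCopulaAux Real

/-- Integrating the `(n+1)`-variable Gaussian-copula joint density over the last
variable yields the `n`-variable Gaussian-copula density whose correlation matrix is
obtained from `R` by deleting the last row and column. -/
theorem gaussian_copula_marginalization (n : ℕ)
    (R : Matrix (Fin (n + 1)) (Fin (n + 1)) ℝ)
    (hsym : R.IsSymm) (hpd : R.PosDef) (hdiag : ∀ i, R i i = 1)
    (Φinv : ℝ → ℝ)
    (hΦinv₁ : ∀ x, Φinv (stdNormalCDF x) = x)
    (hΦinv₂ : ∀ u ∈ Set.Ioo (0:ℝ) 1, stdNormalCDF (Φinv u) = u)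
    (F : Fin (n + 1) → ℝ → ℝ)
    (hFdiff : ∀ i, Differentiable ℝ (F i))
    (hFmono : ∀ i, StrictMono (F i))
    (hFbij : ∀ i, Set.BijOn (F i) Set.univ (Set.Ioo (0:ℝ) 1)) :
    ∀ y : Fin n → ℝ,
      (∫ t : ℝ,
        (Real.sqrt R.det)⁻¹ *
          Real.exp (-(1 / 2) *
            ((fun i => Φinv (F i ((Fin.snoc y t : Fin (n + 1) → ℝ) i))) ⬝ᵥ
              ((R⁻¹ - 1) *ᵥ (fun i => Φinv (F i ((Fin.snoc y t : Fin (n + 1) → ℝ) i)))))) *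
        ∏ i, deriv (F i) ((Fin.snoc y t : Fin (n + 1) → ℝ) i))
      =
      (Real.sqrt (R.submatrix Fin.castSucc Fin.castSucc).det)⁻¹ *
        Real.exp (-(1 / 2) *
          ((fun i : Fin n => Φinv (F i.castSucc (y i))) ⬝ᵥ
            (((R.submatrix Fin.castSucc Fin.castSucc)⁻¹ - 1) *ᵥ
              (fun i : Fin n => Φinv (F i.castSucc (y i)))))) *
      ∏ i : Fin n, deriv (F i.castSucc) (y i) := by
  intro y
  -- basic positivity facts
  have hdet : (0:ℝ) < R.det := hpd.det_pos
  have hdet0 : R.det ≠ 0 := ne_of_gt hdet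
  have hRB : R * R⁻¹ = 1 := Matrix.mul_nonsing_inv R (isUnit_iff_ne_zero.mpr hdet0)
  have hBpd : (R⁻¹).PosDef := hpd.inv
  have ha : (0:ℝ) < R⁻¹ (Fin.last n) (Fin.last n) := posdef_diag_pos hBpd _
  have hBsym : (R⁻¹).IsSymm := by
    rw [Matrix.IsSymm, Matrix.transpose_nonsing_inv, hsym.eq]
  set w : Fin n → ℝ := fun i : Fin n => Φinv (F i.castSucc (y i)) with hw
  set a : ℝ := R⁻¹ (Fin.last n) (Fin.last n) with haa
  set β : ℝ := ∑ i : Fin n, w i * R⁻¹ i.castSucc (Fin.last n) with hβ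
  set γ₀ : ℝ := w ⬝ᵥ (((R⁻¹ - 1).submatrix Fin.castSucc Fin.castSucc) *ᵥ w) with hγ
  set C : ℝ := ∏ i : Fin n, deriv (F i.castSucc) (y i) with hC
  set g₀ : ℝ → ℝ := fun s => (Real.sqrt R.det)⁻¹ *
      Real.exp (-(1 / 2) *
        ((Fin.snoc w s : Fin (n + 1) → ℝ) ⬝ᵥ
          ((R⁻¹ - 1) *ᵥ (Fin.snoc w s : Fin (n + 1) → ℝ)))) with hg₀
  -- step 1: rewrite the integrand
  have hz : ∀ t : ℝ, (fun i => Φinv (F i ((Fin.snoc y t : Fin (n + 1) → ℝ) i)))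
      = (Fin.snoc w (Φinv (F (Fin.last n) t)) : Fin (n + 1) → ℝ) := by
    intro t; funext i
    refine Fin.lastCases ?_ (fun i => ?_) i
    · simp
    · simp [hw]
  have hprod : ∀ t : ℝ, (∏ i, deriv (F i) ((Fin.snoc y t : Fin (n + 1) → ℝ) i))
      = C * deriv (F (Fin.last n)) t := by
    intro t
    rw [Fin.prod_univ_castSucc]
    simp [hC]
  have step1 : (∫ t : ℝ,
        (Real.sqrt R.det)⁻¹ *
          Real.exp (-(1 / 2) *
            ((fun i => Φinv (F i ((Fin.snoc y t : Fin (n + 1) → ℝ) i))) ⬝ᵥ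
              ((R⁻¹ - 1) *ᵥ (fun i => Φinv (F i ((Fin.snoc y t : Fin (n + 1) → ℝ) i)))))) *
        ∏ i, deriv (F i) ((Fin.snoc y t : Fin (n + 1) → ℝ) i))
      = C * ∫ t : ℝ, deriv (F (Fin.last n)) t * g₀ (Φinv (F (Fin.last n) t)) := by
    rw [← MeasureTheory.integral_const_mul]
    congr 1
    funext t
    rw [hz t, hprod t, hg₀]
    ring
  rw [step1]
  -- step 2: substitute u = F_last t
  have hsub1 : (∫ t : ℝ, deriv (F (Fin.last n)) t * g₀ (Φinv (F (Fin.last n) t)))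
      = ∫ u in Set.Ioo (0:ℝ) 1, g₀ (Φinv u) :=
    (subst_lemma (fun x => (hFdiff (Fin.last n) x).hasDerivAt)
      (fun x => deriv_nonneg_of_monotone (hFdiff (Fin.last n) x).hasDerivAt
        (hFmono (Fin.last n)).monotone)
      (hFmono (Fin.last n)).injective
      (hFbij (Fin.last n)).image_eq (fun u => g₀ (Φinv u))).symm
  rw [hsub1]
  -- step 3: substitute u = Φ s
  have hΦderiv' : deriv stdNormalCDF = stdPDF := funext fun x => (stdNormalCDF_hasDerivAt x).deriv
  have hΦmono : StrictMono stdNormalCDF :=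
    strictMono_of_deriv_pos (fun x => by rw [hΦderiv']; exact stdPDF_pos x)
  have hΦimg : stdNormalCDF '' Set.univ = Set.Ioo (0:ℝ) 1 := by
    apply Set.Subset.antisymm
    · rintro _ ⟨x, -, rfl⟩; exact stdNormalCDF_mem_Ioo x
    · intro u hu; exact ⟨Φinv u, trivial, hΦinv₂ u hu⟩
  have hsub2 : (∫ u in Set.Ioo (0:ℝ) 1, g₀ (Φinv u))
      = ∫ s : ℝ, stdPDF s * g₀ (Φinv (stdNormalCDF s)) :=
    subst_lemma stdNormalCDF_hasDerivAt (fun x => (stdPDF_pos x).le)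
      hΦmono.injective hΦimg (fun u => g₀ (Φinv u))
  rw [hsub2]
  have hsub3 : (∫ s : ℝ, stdPDF s * g₀ (Φinv (stdNormalCDF s)))
      = ∫ s : ℝ, stdPDF s * g₀ s := by
    congr 1; funext s; rw [hΦinv₁ s]
  rw [hsub3]
  -- step 4: compute the Gaussian integral
  have hcross : ∀ s : ℝ, ((Fin.snoc w s : Fin (n + 1) → ℝ) ⬝ᵥ
      ((R⁻¹ - 1) *ᵥ (Fin.snoc w s : Fin (n + 1) → ℝ)))
      = γ₀ + 2 * β * s + (a - 1) * s ^ 2 := by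
    intro s
    rw [dot_snoc]
    have e1 : (∑ i : Fin n, w i * (R⁻¹ - 1) i.castSucc (Fin.last n)) = β := by
      apply Finset.sum_congr rfl
      intro i _
      rw [Matrix.sub_apply, Matrix.one_apply_ne (Fin.castSucc_lt_last i).ne]
      ring
    have e2 : (∑ j : Fin n, (R⁻¹ - 1) (Fin.last n) j.castSucc * w j) = β := by
      rw [hβ]
      apply Finset.sum_congr rfl
      intro j _
      rw [Matrix.sub_apply, Matrix.one_apply_ne (Fin.castSucc_lt_last j).ne',
        hBsym.apply (Fin.last n) j.castSucc]
      ring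
    have e3 : (R⁻¹ - 1) (Fin.last n) (Fin.last n) = a - 1 := by
      simp [Matrix.sub_apply, Matrix.one_apply, ← haa]
    rw [e1, e2, e3, ← hγ]
    ring
  have hquadint : (∫ s : ℝ, stdPDF s * g₀ s)
      = ((Real.sqrt (2 * π))⁻¹ * (Real.sqrt R.det)⁻¹ * Real.exp (-γ₀ / 2)) *
        (Real.sqrt (π / (a / 2)) * Real.exp (-(-β) ^ 2 / (4 * (-(a / 2))))) := by
    have hpt : ∀ s : ℝ, stdPDF s * g₀ s
        = ((Real.sqrt (2 * π))⁻¹ * (Real.sqrt R.det)⁻¹ * Real.exp (-γ₀ / 2)) *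
          Real.exp ((-(a / 2)) * s ^ 2 + (-β) * s) := by
      intro s
      rw [hg₀]
      simp only []
      rw [hcross s]
      unfold stdPDF
      rw [div_eq_mul_inv, show
          Real.exp (-s ^ 2 / 2) * (Real.sqrt (2 * π))⁻¹ *
            ((Real.sqrt R.det)⁻¹ * Real.exp (-(1 / 2) * (γ₀ + 2 * β * s + (a - 1) * s ^ 2)))
          = (Real.sqrt (2 * π))⁻¹ * (Real.sqrt R.det)⁻¹ *
            (Real.exp (-s ^ 2 / 2) * Real.exp (-(1 / 2) * (γ₀ + 2 * β * s + (a - 1) * s ^ 2)))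
          from by ring, ← Real.exp_add,
        show -s ^ 2 / 2 + -(1 / 2) * (γ₀ + 2 * β * s + (a - 1) * s ^ 2)
          = -γ₀ / 2 + ((-(a / 2)) * s ^ 2 + (-β) * s) from by ring,
        Real.exp_add]
      ring
    calc (∫ s : ℝ, stdPDF s * g₀ s)
        = ∫ s : ℝ, ((Real.sqrt (2 * π))⁻¹ * (Real.sqrt R.det)⁻¹ * Real.exp (-γ₀ / 2)) *
            Real.exp ((-(a / 2)) * s ^ 2 + (-β) * s) := by
          congr 1; funext s; exact hpt s
      _ = ((Real.sqrt (2 * π))⁻¹ * (Real.sqrt R.det)⁻¹ * Real.exp (-γ₀ / 2)) *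
            ∫ s : ℝ, Real.exp ((-(a / 2)) * s ^ 2 + (-β) * s) :=
          MeasureTheory.integral_const_mul _ _
      _ = _ := by
          rw [integral_rexp_quadratic (by linarith : -(a / 2) < 0) (-β), neg_neg]
  rw [hquadint]
  -- step 5: linear algebra identities
  have hdet' : (R.submatrix Fin.castSucc Fin.castSucc).det = R.det * a :=
    (det_mul_inv_last_last R hdet0).symm
  have hexp : ((fun i : Fin n => Φinv (F i.castSucc (y i))) ⬝ᵥ
      (((R.submatrix Fin.castSucc Fin.castSucc)⁻¹ - 1) *ᵥ
        (fun i : Fin n => Φinv (F i.castSucc (y i)))))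
      = γ₀ - a⁻¹ * β ^ 2 := by
    rw [← hw]
    rw [submatrix_inv_eq R hsym hRB (ne_of_gt ha)]
    have hmat : (Matrix.of fun i j : Fin n =>
        R⁻¹ i.castSucc j.castSucc - (R⁻¹ (Fin.last n) (Fin.last n))⁻¹ *
          R⁻¹ i.castSucc (Fin.last n) * R⁻¹ j.castSucc (Fin.last n)) - 1
        = ((R⁻¹ - 1).submatrix Fin.castSucc Fin.castSucc) -
          Matrix.of (fun i j : Fin n =>
            a⁻¹ * R⁻¹ i.castSucc (Fin.last n) * R⁻¹ j.castSucc (Fin.last n)) := by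
      ext i j
      simp only [Matrix.sub_apply, Matrix.of_apply, Matrix.submatrix_apply,
        Matrix.one_apply, Fin.castSucc_inj, haa]
      ring
    rw [hmat, dot_rank_one]
  rw [hexp]
  -- step 6: final arithmetic
  have hsqrt2pi : (0:ℝ) < Real.sqrt (2 * π) := Real.sqrt_pos.mpr (by positivity)
  have hsqrtdet : (0:ℝ) < Real.sqrt R.det := Real.sqrt_pos.mpr hdet
  have hsqrta : (0:ℝ) < Real.sqrt a := Real.sqrt_pos.mpr ha
  have h1 : Real.sqrt (π / (a / 2)) = Real.sqrt (2 * π) / Real.sqrt a := by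
    rw [show π / (a / 2) = (2 * π) / a from by field_simp,
      Real.sqrt_div (by positivity) a]
  have h2 : Real.sqrt (R.submatrix Fin.castSucc Fin.castSucc).det
      = Real.sqrt R.det * Real.sqrt a := by
    rw [hdet', Real.sqrt_mul hdet.le]
  have h3 : Real.exp (-γ₀ / 2) * Real.exp (-(-β) ^ 2 / (4 * (-(a / 2))))
      = Real.exp (-(1 / 2) * (γ₀ - a⁻¹ * β ^ 2)) := by
    rw [← Real.exp_add]
    congr 1
    field_simp
    ring
  rw [h1, h2]
  rw [show ((Real.sqrt (2 * π))⁻¹ * (Real.sqrt R.det)⁻¹ * Real.exp (-γ₀ / 2)) *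
      (Real.sqrt (2 * π) / Real.sqrt a * Real.exp (-(-β) ^ 2 / (4 * (-(a / 2)))))
      = ((Real.sqrt (2 * π))⁻¹ * Real.sqrt (2 * π)) *
        ((Real.sqrt R.det)⁻¹ * (Real.sqrt a)⁻¹) *
        (Real.exp (-γ₀ / 2) * Real.exp (-(-β) ^ 2 / (4 * (-(a / 2))))) from by
    rw [div_eq_mul_inv]; ring]
  rw [inv_mul_cancel₀ (ne_of_gt hsqrt2pi), h3, one_mul, ← mul_inv]
  ring
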